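/- Let Φ ∈ ℝ^{M×N}, y ∈ ℝ^M, let Λ_i ⊆ Λ_l ⊆ {1,…,N}, and let x'_i and x'_l be least-squares estimates of y on Λ_i and Λ_l respectively. Then ‖y − Φx'_l‖ ≤ ‖y − Φx'_i‖. Moreover, if y = Φx for some x ∈ ℝ^N and Φ has restricted isometry constant δ_s of order s ≥ |Λ_i ∪ supp(x)|, then 0 ≤ ‖y − Φx'_i‖² − ‖y − Φx'_l‖² ≤ (1 + δ_s)·‖x'_i − x‖². -/

import Mathlib

open Finset

noncomputable section

/-- The Euclidean (ℓ₂) norm of a vector in `Fin n → ℝ`. -/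
def l2norm {n : ℕ} (v : Fin n → ℝ) : ℝ := Real.sqrt (∑ i, (v i) ^ 2)

/-- The sparsity `‖v‖₀` of a vector: the number of its nonzero entries. -/
def sparsity {n : ℕ} (v : Fin n → ℝ) : ℕ := (Finset.univ.filter fun i => v i ≠ 0).card

/-- The support of a vector, as a `Finset`. -/
def suppF {n : ℕ} (v : Fin n → ℝ) : Finset (Fin n) := Finset.univ.filter fun i => v i ≠ 0

/-- `restr v S` is the vector agreeing with `v` on `S` and zero outside `S`. -/
def restr {n : ℕ} (v : Fin n → ℝ) (S : Finset (Fin n)) : Fin n → ℝ :=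
  fun i => if i ∈ S then v i else 0

/-- `Φ` has restricted isometry constant `δ < 1` of order `s`:
`(1-δ)‖z‖² ≤ ‖Φz‖² ≤ (1+δ)‖z‖²` for every `s`-sparse `z`. -/
def HasRIC {M N : ℕ} (Φ : Matrix (Fin M) (Fin N) ℝ) (s : ℕ) (δ : ℝ) : Prop :=
  δ < 1 ∧ ∀ z : Fin N → ℝ, sparsity z ≤ s →
    (1 - δ) * (l2norm z) ^ 2 ≤ (l2norm (Φ.mulVec z)) ^ 2 ∧
      (l2norm (Φ.mulVec z)) ^ 2 ≤ (1 + δ) * (l2norm z) ^ 2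

/-- `Λ` is a top-`k` support of `v`: `|Λ| = k` and every entry of `v` inside `Λ`
dominates (in magnitude) every entry outside `Λ`. -/
def IsTopSupport {n : ℕ} (v : Fin n → ℝ) (k : ℕ) (Λ : Finset (Fin n)) : Prop :=
  Λ.card = k ∧ ∀ i ∈ Λ, ∀ j ∉ Λ, |v j| ≤ |v i|

/-- `x'` is a least-squares estimate of `y` on the support `Λ`. -/
def IsLSE {M N : ℕ} (Φ : Matrix (Fin M) (Fin N) ℝ) (y : Fin M → ℝ)
    (Λ : Finset (Fin N)) (x' : Fin N → ℝ) : Prop :=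
  suppF x' ⊆ Λ ∧ ∀ z : Fin N → ℝ, suppF z ⊆ Λ →
    l2norm (y - Φ.mulVec x') ≤ l2norm (y - Φ.mulVec z)

theorem l2norm_nonneg {n : ℕ} (v : Fin n → ℝ) : 0 ≤ l2norm v :=
  Real.sqrt_nonneg _

theorem l2norm_neg {n : ℕ} (v : Fin n → ℝ) : l2norm (-v) = l2norm v := by
  simp only [l2norm, Pi.neg_apply, neg_sq]

theorem suppF_sub_subset_union {n : ℕ} (u v : Fin n → ℝ) :
    suppF (u - v) ⊆ suppF u ∪ suppF v := by
  intro j hj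
  simp only [suppF, mem_union, mem_filter, mem_univ, true_and, Pi.sub_apply] at hj ⊢
  by_contra! h
  exact hj (by rw [h.1, h.2, sub_zero])

theorem HasRIC.sq_l2norm_mulVec_le {M N : ℕ} {Φ : Matrix (Fin M) (Fin N) ℝ} {s : ℕ} {δ : ℝ}
    (hΦ : HasRIC Φ s δ) {z : Fin N → ℝ} (hz : (suppF z).card ≤ s) :
    l2norm (Φ.mulVec z) ^ 2 ≤ (1 + δ) * l2norm z ^ 2 :=
  (hΦ.2 z hz).2

theorem IsLSE.residual_le_of_subset {M N : ℕ} {Φ : Matrix (Fin M) (Fin N) ℝ} {y : Fin M → ℝ}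
    {Λi Λl : Finset (Fin N)} {xi xl : Fin N → ℝ} (hi : IsLSE Φ y Λi xi) (hl : IsLSE Φ y Λl xl)
    (hsub : Λi ⊆ Λl) :
    l2norm (y - Φ.mulVec xl) ≤ l2norm (y - Φ.mulVec xi) :=
  hl.2 xi (hi.1.trans hsub)

theorem l2norm_residual_eq_of_eq_mulVec {M N : ℕ} {Φ : Matrix (Fin M) (Fin N) ℝ}
    {y : Fin M → ℝ} {x : Fin N → ℝ} (hy : y = Φ.mulVec x) (z : Fin N → ℝ) :
    l2norm (y - Φ.mulVec z) = l2norm (Φ.mulVec (z - x)) := by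
  rw [hy, Matrix.mulVec_sub, ← neg_sub, l2norm_neg]

/-- for nested supports `Λᵢ ⊆ Λₗ`, the least-squares residual on the
larger support is smaller; moreover, when `y = Φx` and `Φ` satisfies the RIP of an
order `s ≥ |Λᵢ ∪ supp(x)|`, the difference of squared residuals is between `0` and
`(1 + δ_s)‖x'ᵢ − x‖²`. -/
theorem nested_lse_residuals {M N : ℕ} (Φ : Matrix (Fin M) (Fin N) ℝ)
    (y : Fin M → ℝ) (Λi Λl : Finset (Fin N)) (hsub : Λi ⊆ Λl)
    (xi xl : Fin N → ℝ) (hi : IsLSE Φ y Λi xi) (hl : IsLSE Φ y Λl xl) :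
    l2norm (y - Φ.mulVec xl) ≤ l2norm (y - Φ.mulVec xi) ∧
      ∀ (x : Fin N → ℝ) (s : ℕ) (δ : ℝ), y = Φ.mulVec x → HasRIC Φ s δ →
        (Λi ∪ suppF x).card ≤ s →
        0 ≤ (l2norm (y - Φ.mulVec xi)) ^ 2 - (l2norm (y - Φ.mulVec xl)) ^ 2 ∧
          (l2norm (y - Φ.mulVec xi)) ^ 2 - (l2norm (y - Φ.mulVec xl)) ^ 2 ≤
            (1 + δ) * (l2norm (xi - x)) ^ 2 := by
  have hres := hi.residual_le_of_subset hl hsub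
  refine ⟨hres, fun x s δ hy hΦ hcard => ⟨?_, ?_⟩⟩
  · exact sub_nonneg.mpr (pow_le_pow_left₀ (l2norm_nonneg _) hres 2)
  · have hsupp : (suppF (xi - x)).card ≤ s :=
      (card_le_card ((suppF_sub_subset_union xi x).trans (union_subset_union_left hi.1))).trans
        hcard
    calc l2norm (y - Φ.mulVec xi) ^ 2 - l2norm (y - Φ.mulVec xl) ^ 2
        ≤ l2norm (Φ.mulVec (xi - x)) ^ 2 := by
          rw [← l2norm_residual_eq_of_eq_mulVec hy]
          exact sub_le_self _ (sq_nonneg _)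
      _ ≤ (1 + δ) * l2norm (xi - x) ^ 2 := hΦ.sq_l2norm_mulVec_le hsupp
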